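/- Stack shape invariant for RKNL: for any reachable configuration k with stack s, the decoding of s (with respect to the execution history of k) is a normal-order context. -/

import Mathlib

set_option autoImplicit false
set_option maxHeartbeats 1000000

namespace RKNL

/- Pure lambda terms over a type of variables. -/
inductive Tm (V : Type) : Type
  | var : V → Tm V
  | app : Tm V → Tm V → Tm V
  | lam : V → Tm V → Tm V
  deriving DecidableEq

abbrev Ident : Type := ℕ
abbrev Loc : Type := ℕ

/-- Lookup in an association list (first match). -/
def lookupL {β : Type} : List (ℕ × β) → ℕ → Option β
  | [], _ => none
  | (a, b) :: l, x => if x = a then some b else lookupL l x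

/-- Update of an association list. -/
def updL {β : Type} (l : List (ℕ × β)) (x : ℕ) (b : β) : List (ℕ × β) :=
  l.map fun p => if p.1 = x then (x, b) else p

/-- Environments map identifiers to store locations. -/
abbrev Env : Type := List (Ident × Loc)

/-- Closures pair a term with an environment. -/
abbrev Closure : Type := Tm Ident × Env

/-- Values: terms (normal forms), or abstraction closures annotated with a location. -/
inductive Value : Type
  | tm : Tm Ident → Value
  | abs : Ident → Tm Ident → Env → Loc → Value
  deriving DecidableEq

/-- Storable values (memothunks):
`pend x t e` is the `todo ⊥` placeholder allocated for the abstraction `(λx.t, e)`,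
`todo c` an unevaluated argument thunk, `done v` a memoized value. -/
inductive Storable : Type
  | pend : Ident → Tm Ident → Env → Storable
  | todo : Closure → Storable
  | done : Value → Storable
  deriving DecidableEq

/-- Stores map locations to storable values. -/
abbrev Store : Type := List (Loc × Storable)

/-- Stack frames: `arg c` is `(□ c)`, `appL t` is `(t □)`, `lamF x` is `λx.□`,
`cache ℓ` is `ℓ := □`. -/
inductive Frame : Type
  | arg : Closure → Frame
  | appL : Tm Ident → Frame
  | lamF : Ident → Frame
  | cache : Loc → Frame
  deriving DecidableEq

abbrev Stack : Type := List Frame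

/-- Machine configurations: evaluation mode `⟨c, s, σ⟩▸` and continue mode `⟨σ, v, s⟩◂`. -/
inductive Conf : Type
  | eval : Closure → Stack → Store → Conf
  | cont : Store → Value → Stack → Conf

/-- The initial configuration loading a term. -/
def Conf.init (t : Tm Ident) : Conf := .eval (t, []) [] []

def Conf.store : Conf → Store
  | .eval _ _ σ => σ
  | .cont σ _ _ => σ

def Conf.stack : Conf → Stack
  | .eval _ s _ => s
  | .cont _ _ s => s

/- Identifiers occurring in a configuration (used for freshness of generated names). -/
def tmVars : Tm Ident → List Ident
  | .var x => [x]
  | .app a b => tmVars a ++ tmVars b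
  | .lam x t => x :: tmVars t

def envVars (e : Env) : List Ident := e.map Prod.fst

def valVars : Value → List Ident
  | .tm t => tmVars t
  | .abs x t e _ => x :: (tmVars t ++ envVars e)

def storableVars : Storable → List Ident
  | .pend x t e => x :: (tmVars t ++ envVars e)
  | .todo c => tmVars c.1 ++ envVars c.2
  | .done v => valVars v

def frameVars : Frame → List Ident
  | .arg c => tmVars c.1 ++ envVars c.2
  | .appL t => tmVars t
  | .lamF x => [x]
  | .cache _ => []

def stackVars (s : Stack) : List Ident := s.foldr (fun f acc => frameVars f ++ acc) []

def storeVars (σ : Store) : List Ident := σ.foldr (fun p acc => storableVars p.2 ++ acc) []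

def confVars : Conf → List Ident
  | .eval c s σ => tmVars c.1 ++ envVars c.2 ++ stackVars s ++ storeVars σ
  | .cont σ v s => valVars v ++ stackVars s ++ storeVars σ

/-- The top of the stack is not an argument frame. -/
def Stack.noArgTop : Stack → Prop
  | Frame.arg _ :: _ => False
  | _ => True

/-- The top of the stack is not a memoization frame. -/
def Stack.noCacheTop : Stack → Prop
  | Frame.cache _ :: _ => False
  | _ => True

/-- The eleven transitions of the RKNL abstract machine, indexed by rule number. -/
inductive Step : ℕ → Conf → Conf → Prop
  | r1 {t1 t2 : Tm Ident} {e : Env} {s : Stack} {σ : Store} :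
      Step 1 (.eval (.app t1 t2, e) s σ) (.eval (t1, e) (.arg (t2, e) :: s) σ)
  | r2 {x : Ident} {t : Tm Ident} {e : Env} {s : Stack} {σ : Store} {ℓ : Loc}
      (h : lookupL σ ℓ = none) :
      Step 2 (.eval (.lam x t, e) s σ) (.cont ((ℓ, .pend x t e) :: σ) (.abs x t e ℓ) s)
  | r3 {x : Ident} {e e2 : Env} {s : Stack} {σ : Store} {ℓ : Loc} {t : Tm Ident}
      (he : lookupL e x = some ℓ) (hσ : lookupL σ ℓ = some (.todo (t, e2))) :
      Step 3 (.eval (.var x, e) s σ) (.eval (t, e2) (.cache ℓ :: s) σ)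
  | r4done {x : Ident} {e : Env} {s : Stack} {σ : Store} {ℓ : Loc} {v : Value}
      (he : lookupL e x = some ℓ) (hσ : lookupL σ ℓ = some (.done v)) :
      Step 4 (.eval (.var x, e) s σ) (.cont σ v s)
  | r4free {x : Ident} {e : Env} {s : Stack} {σ : Store}
      (he : lookupL e x = none) :
      Step 4 (.eval (.var x, e) s σ) (.cont σ (.tm (.var x)) s)
  | r5 {σ : Store} {v : Value} {ℓ : Loc} {s : Stack} :
      Step 5 (.cont σ v (.cache ℓ :: s)) (.cont (updL σ ℓ (.done v)) v s)
  | r6 {σ : Store} {x : Ident} {t t2 : Tm Ident} {e e2 : Env} {ℓ ℓ2 : Loc} {s : Stack}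
      (h : lookupL σ ℓ2 = none) :
      Step 6 (.cont σ (.abs x t e ℓ) (.arg (t2, e2) :: s))
             (.eval (t, (x, ℓ2) :: e) s ((ℓ2, .todo (t2, e2)) :: σ))
  | r7 {σ : Store} {x x' x0 : Ident} {t t0 : Tm Ident} {e e0 : Env} {ℓ ℓ2 : Loc} {s : Stack}
      (hσ : lookupL σ ℓ = some (.pend x0 t0 e0))
      (hs1 : Stack.noArgTop s) (hs2 : Stack.noCacheTop s)
      (hℓ2 : lookupL σ ℓ2 = none)
      (hx' : x' ∉ confVars (.cont σ (.abs x t e ℓ) s)) :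
      Step 7 (.cont σ (.abs x t e ℓ) s)
             (.eval (t, (x, ℓ2) :: e) (.lamF x' :: .cache ℓ :: s)
                    ((ℓ2, .done (.tm (.var x'))) :: σ))
  | r8 {σ : Store} {x : Ident} {t : Tm Ident} {e : Env} {ℓ : Loc} {s : Stack} {v : Value}
      (hσ : lookupL σ ℓ = some (.done v))
      (hs1 : Stack.noArgTop s) (hs2 : Stack.noCacheTop s) :
      Step 8 (.cont σ (.abs x t e ℓ) s) (.cont σ v s)
  | r9 {σ : Store} {t t2 : Tm Ident} {e2 : Env} {s : Stack} :
      Step 9 (.cont σ (.tm t) (.arg (t2, e2) :: s)) (.eval (t2, e2) (.appL t :: s) σ)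
  | r10 {σ : Store} {t1 t2 : Tm Ident} {s : Stack} :
      Step 10 (.cont σ (.tm t2) (.appL t1 :: s)) (.cont σ (.tm (.app t1 t2)) s)
  | r11 {σ : Store} {t : Tm Ident} {x : Ident} {s : Stack} :
      Step 11 (.cont σ (.tm t) (.lamF x :: s)) (.cont σ (.tm (.lam x t)) s)

/-- Reachability by machine transitions. -/
inductive Reach (k0 : Conf) : Conf → Prop
  | refl : Reach k0 k0
  | step {k k' : Conf} {r : ℕ} : Reach k0 k → Step r k k' → Reach k0 k'

/- Generic syntax material used by the decoding: variable renaming of terms,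
one-hole contexts, neutral/normal terms, normal-order contexts,
capture-avoiding substitution, normal-order reduction and α-equivalence. -/

def Tm.mapVar {V V' : Type} (f : V → V') : Tm V → Tm V'
  | .var x => .var (f x)
  | .app a b => .app (Tm.mapVar f a) (Tm.mapVar f b)
  | .lam x t => .lam (f x) (Tm.mapVar f t)

/-- Variables of decoded terms: `Sum.inl x` is an ordinary identifier
(free variables and generated fresh names), `Sum.inr x` is the overlined
(marked) copy `x̄`, taken from a disjoint copy of the set of identifiers. -/
abbrev W : Type := Ident ⊕ Ident

/-- Embedding of machine terms into decoded terms. -/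
def emb (t : Tm Ident) : Tm W := Tm.mapVar Sum.inl t

/-- One-hole contexts. -/
inductive Ctx (V : Type) : Type
  | hole : Ctx V
  | appL : Ctx V → Tm V → Ctx V
  | appR : Tm V → Ctx V → Ctx V
  | lam : V → Ctx V → Ctx V

def Ctx.plug {V : Type} : Ctx V → Tm V → Tm V
  | .hole, t => t
  | .appL C u, t => .app (Ctx.plug C t) u
  | .appR u C, t => .app u (Ctx.plug C t)
  | .lam x C, t => .lam x (Ctx.plug C t)

def Ctx.comp {V : Type} : Ctx V → Ctx V → Ctx V
  | .hole, D => D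
  | .appL C u, D => .appL (Ctx.comp C D) u
  | .appR u C, D => .appR u (Ctx.comp C D)
  | .lam x C, D => .lam x (Ctx.comp C D)

mutual
  inductive Neutral {V : Type} : Tm V → Prop
    | var (x : V) : Neutral (.var x)
    | app {a n : Tm V} : Neutral a → NormalTm n → Neutral (.app a n)
  inductive NormalTm {V : Type} : Tm V → Prop
    | lam {x : V} {t : Tm V} : NormalTm t → NormalTm (.lam x t)
    | neu {a : Tm V} : Neutral a → NormalTm a
end

mutual
  inductive NOCtx {V : Type} : Ctx V → Prop
    | bar {C : Ctx V} : NOBar C → NOCtx C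
    | lam {x : V} {C : Ctx V} : NOCtx C → NOCtx (.lam x C)
  inductive NOBar {V : Type} : Ctx V → Prop
    | hole : NOBar .hole
    | appL {C : Ctx V} {t : Tm V} : NOBar C → NOBar (.appL C t)
    | appR {a : Tm V} {C : Ctx V} : Neutral a → NOCtx C → NOBar (.appR a C)
end

/-- `x` occurs free in a term. -/
inductive FreeIn {V : Type} (x : V) : Tm V → Prop
  | var : FreeIn x (.var x)
  | appL {a b : Tm V} : FreeIn x a → FreeIn x (.app a b)
  | appR {a b : Tm V} : FreeIn x b → FreeIn x (.app a b)
  | lam {y : V} {t : Tm V} : x ≠ y → FreeIn x t → FreeIn x (.lam y t)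

/-- Capture-avoiding substitution `t{x := u}` (as a relation, allowing
α-renaming of binders that would capture variables of `u`). -/
inductive SubstRel {V : Type} : V → Tm V → Tm V → Tm V → Prop
  | var_eq {x : V} {u : Tm V} : SubstRel x u (.var x) u
  | var_ne {x y : V} {u : Tm V} : y ≠ x → SubstRel x u (.var y) (.var y)
  | app {x : V} {u a a' b b' : Tm V} : SubstRel x u a a' → SubstRel x u b b' →
      SubstRel x u (.app a b) (.app a' b')
  | lam_same {x : V} {u t : Tm V} : SubstRel x u (.lam x t) (.lam x t)
  | lam {x y : V} {u t t' : Tm V} : y ≠ x → ¬ FreeIn y u → SubstRel x u t t' →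
      SubstRel x u (.lam y t) (.lam y t')
  | lam_rename {x y z : V} {u t t0 t' : Tm V} : y ≠ x → FreeIn y u →
      z ≠ x → ¬ FreeIn z u → ¬ FreeIn z t →
      SubstRel y (.var z) t t0 → SubstRel x u t0 t' →
      SubstRel x u (.lam y t) (.lam z t')

/-- One step of normal-order reduction: β-contraction in a normal-order context. -/
inductive NOStep {V : Type} : Tm V → Tm V → Prop
  | mk {N : Ctx V} {x : V} {b u r : Tm V} :
      NOCtx N → SubstRel x u b r →
      NOStep (N.plug (.app (.lam x b) u)) (N.plug r)

/-- Correspondence of variables under a list of bound-variable renamings. -/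
inductive AVar {V : Type} : List (V × V) → V → V → Prop
  | nil {x : V} : AVar [] x x
  | here {x y : V} {ρ : List (V × V)} : AVar ((x, y) :: ρ) x y
  | there {x y a b : V} {ρ : List (V × V)} :
      x ≠ a → y ≠ b → AVar ρ x y → AVar ((a, b) :: ρ) x y

/-- α-equivalence up to a list of bound-variable renamings. -/
inductive Alpha {V : Type} : List (V × V) → Tm V → Tm V → Prop
  | var {ρ : List (V × V)} {x y : V} : AVar ρ x y → Alpha ρ (.var x) (.var y)
  | app {ρ : List (V × V)} {a a' b b' : Tm V} :
      Alpha ρ a a' → Alpha ρ b b' → Alpha ρ (.app a b) (.app a' b')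
  | lam {ρ : List (V × V)} {x y : V} {t t' : Tm V} :
      Alpha ((x, y) :: ρ) t t' → Alpha ρ (.lam x t) (.lam y t')

/-- α-equivalence: equality up to renaming of bound variables. -/
def AlphaEq {V : Type} (t t' : Tm V) : Prop := Alpha [] t t'

/-- Subterm relation. -/
inductive Subtm {V : Type} : Tm V → Tm V → Prop
  | refl (t : Tm V) : Subtm t t
  | appL {s a b : Tm V} : Subtm s a → Subtm s (.app a b)
  | appR {s a b : Tm V} : Subtm s b → Subtm s (.app a b)
  | lam {s t : Tm V} {x : V} : Subtm s t → Subtm s (.lam x t)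

def IsRedex {V : Type} (t : Tm V) : Prop := ∃ (x : V) (b u : Tm V), t = .app (.lam x b) u

/-- β-normal form: no subterm is a β-redex. -/
def BetaNormal {V : Type} (t : Tm V) : Prop := ∀ s : Tm V, Subtm s t → ¬ IsRedex s

/- The history-dependent decoding of RKNL configurations. -/

/-- `HistFrom k0 H k` : `H` is the full sequence of configurations (oldest
first) of an execution from `k0` to `k`. -/
inductive HistFrom (k0 : Conf) : List Conf → Conf → Prop
  | refl : HistFrom k0 [k0] k0
  | step {H : List Conf} {k k' : Conf} {r : ℕ} :
      HistFrom k0 H k → Step r k k' → HistFrom k0 (H ++ [k']) k'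

/-- `initOf H ℓ = some (H', sv)` : in the history `H`, location `ℓ` was
initialized with the storable value `sv`, and `H'` is the prefix of the history
up to (and including) the configuration where `ℓ` was initialized. -/
def initOf : List Conf → Loc → Option (List Conf × Storable)
  | [], _ => none
  | k :: H, ℓ =>
    match lookupL (Conf.store k) ℓ with
    | some sv => some ([k], sv)
    | none => Option.map (fun p => (k :: p.1, p.2)) (initOf H ℓ)

/-- Decoding environments: an identifier is mapped either to a store location
(`Sum.inl ℓ`) or to an overlined variable `ȳ` (`Sum.inr y`) introduced when
decoding an abstraction. -/
abbrev DEnv : Type := List (Ident × (Loc ⊕ Ident))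

def embEnv (e : Env) : DEnv := e.map fun p => (p.1, Sum.inl p.2)

/-- Decoding of closures relative to an execution history:
`DecC H t e d` means the closure with term `t` and decoding environment `e`
decodes to the term `d` relative to the history `H`. A variable bound to a
location initialized (by rule 6) with an argument thunk decodes to the decoding
of that thunk at the time of initialization; a variable bound to a location
initialized (by rule 7) with a fresh variable decodes to that variable; an
unbound variable decodes to itself. -/
inductive DecC : List Conf → Tm Ident → DEnv → Tm W → Prop
  | app {H : List Conf} {t1 t2 : Tm Ident} {e : DEnv} {d1 d2 : Tm W} :
      DecC H t1 e d1 → DecC H t2 e d2 → DecC H (.app t1 t2) e (.app d1 d2)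
  | lam {H : List Conf} {x : Ident} {t : Tm Ident} {e : DEnv} {d : Tm W} :
      DecC H t ((x, Sum.inr x) :: e) d → DecC H (.lam x t) e (.lam (Sum.inr x) d)
  | var_bar {H : List Conf} {x y : Ident} {e : DEnv} :
      lookupL e x = some (Sum.inr y) → DecC H (.var x) e (.var (Sum.inr y))
  | var_arg {H H' : List Conf} {x : Ident} {e : DEnv} {ℓ : Loc}
      {t2 : Tm Ident} {e2 : Env} {d : Tm W} :
      lookupL e x = some (Sum.inl ℓ) →
      initOf H ℓ = some (H', .todo (t2, e2)) →
      DecC H' t2 (embEnv e2) d →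
      DecC H (.var x) e d
  | var_fresh {H H' : List Conf} {x x' : Ident} {e : DEnv} {ℓ : Loc} :
      lookupL e x = some (Sum.inl ℓ) →
      initOf H ℓ = some (H', .done (.tm (.var x'))) →
      DecC H (.var x) e (.var (Sum.inl x'))
  | var_free {H : List Conf} {x : Ident} {e : DEnv} :
      lookupL e x = none → DecC H (.var x) e (.var (Sum.inl x))

/-- Decoding of values. -/
inductive DecV : List Conf → Value → Tm W → Prop
  | tm {H : List Conf} {t : Tm Ident} : DecV H (.tm t) (emb t)
  | abs {H : List Conf} {x : Ident} {t : Tm Ident} {e : Env} {ℓ : Loc} {d : Tm W} :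
      DecC H (.lam x t) (embEnv e) d → DecV H (.abs x t e ℓ) d

/-- Decoding of stacks into one-hole contexts (memoization frames are ignored). -/
inductive DecS : List Conf → Stack → Ctx W → Prop
  | nil {H : List Conf} : DecS H [] .hole
  | arg {H : List Conf} {t : Tm Ident} {e : Env} {s : Stack} {C : Ctx W} {d : Tm W} :
      DecS H s C → DecC H t (embEnv e) d →
      DecS H (.arg (t, e) :: s) (C.comp (.appL .hole d))
  | appL {H : List Conf} {t : Tm Ident} {s : Stack} {C : Ctx W} :
      DecS H s C → DecS H (.appL t :: s) (C.comp (.appR (emb t) .hole))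
  | lamF {H : List Conf} {x : Ident} {s : Stack} {C : Ctx W} :
      DecS H s C → DecS H (.lamF x :: s) (C.comp (.lam (Sum.inl x) .hole))
  | cache {H : List Conf} {ℓ : Loc} {s : Stack} {C : Ctx W} :
      DecS H s C → DecS H (.cache ℓ :: s) C

/-- Decoding of configurations: the decoded focus is plugged into the decoded stack. -/
inductive DecK : List Conf → Conf → Tm W → Prop
  | eval {H : List Conf} {t : Tm Ident} {e : Env} {s : Stack} {σ : Store}
      {C : Ctx W} {d : Tm W} :
      DecS H s C → DecC H t (embEnv e) d → DecK H (.eval (t, e) s σ) (C.plug d)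
  | cont {H : List Conf} {σ : Store} {v : Value} {s : Stack} {C : Ctx W} {d : Tm W} :
      DecS H s C → DecV H v d → DecK H (.cont σ v s) (C.plug d)

/-
Reachable configurations satisfy a refinement of the paper's π/ϱ grammar that also
records what the store holds. Environments and the memo frames of π-stacks point to
*argument cells* (thunks, or memoized neutral terms and closures), while the memo frame
under a λ-frame points to the *abstraction cell* allocated by rule 2 (still pending, or holding a
λ-normal form). The two kinds of cells are told apart by their contents, so updating a
cell of one kind never changes the class of another cell. Memoized terms are normal,
and a value returned to an argument or memo frame is neutral or a closure: this is
what makes the term of every `(a □)` frame pushed by rule 9 neutral. All this is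
preserved by each transition, and decoding a π- or ϱ-stack, frame by frame from the
bottom, stays inside the inside-out grammar of normal-order contexts.
-/

section Lookup

variable {β : Type}

lemma lookupL_cons (a : ℕ) (b : β) (l : List (ℕ × β)) (x : ℕ) :
    lookupL ((a, b) :: l) x = if x = a then some b else lookupL l x := rfl

lemma lookupL_mem {l : List (ℕ × β)} {x : ℕ} {b : β} (h : lookupL l x = some b) :
    (x, b) ∈ l := by
  induction l with
  | nil => simp [lookupL] at h
  | cons p l ih =>
    obtain ⟨a, c⟩ := p
    rw [lookupL_cons] at h
    split at h
    · cases h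
      subst_vars
      exact List.mem_cons_self
    · exact List.mem_cons_of_mem _ (ih h)

lemma lookupL_cons_of_lookupL_eq_none {l : List (ℕ × β)} {a x : ℕ} {b c : β}
    (ha : lookupL l a = none) (hx : lookupL l x = some c) :
    lookupL ((a, b) :: l) x = some c := by
  rw [lookupL_cons, if_neg]
  · exact hx
  · rintro rfl
    simp [ha] at hx

lemma lookupL_updL (l : List (ℕ × β)) (a : ℕ) (b : β) (x : ℕ) :
    lookupL (updL l a b) x = if x = a then (lookupL l a).map fun _ => b else lookupL l x := by
  induction l with
  | nil => simp [updL, lookupL]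
  | cons p l ih =>
    obtain ⟨c, d⟩ := p
    change lookupL ((if c = a then (a, b) else (c, d)) :: updL l a b) x = _
    by_cases hca : c = a
    · subst hca
      by_cases hx : x = c <;> simp [lookupL_cons, hx, ih]
    · by_cases hx : x = c
      · subst hx
        simp [lookupL_cons, hca]
      · simp [lookupL_cons, hx, hca, ih, Ne.symm hca]

end Lookup

section Locations

def envLocs (e : Env) : List Loc := e.map Prod.snd

def Value.locs : Value → List Loc
  | .abs _ _ e _ => envLocs e
  | .tm _ => []

def Storable.locs : Storable → List Loc
  | .todo c => envLocs c.2
  | .done v => v.locs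
  | .pend .. => []

def Frame.locs : Frame → List Loc
  | .arg c => envLocs c.2
  | _ => []

def storeLocs (σ : Store) : List Loc := σ.flatMap fun p => p.2.locs

def Conf.locs : Conf → List Loc
  | .eval c s σ => envLocs c.2 ++ s.flatMap Frame.locs ++ storeLocs σ
  | .cont σ v s => v.locs ++ s.flatMap Frame.locs ++ storeLocs σ

lemma mem_envLocs_of_lookupL {e : Env} {x : Ident} {ℓ : Loc} (h : lookupL e x = some ℓ) :
    ℓ ∈ envLocs e :=
  List.mem_map.2 ⟨_, lookupL_mem h, rfl⟩

lemma mem_storeLocs_of_lookupL {σ : Store} {ℓ₀ ℓ : Loc} {sv : Storable}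
    (h : lookupL σ ℓ₀ = some sv) (hℓ : ℓ ∈ sv.locs) : ℓ ∈ storeLocs σ :=
  List.mem_flatMap.2 ⟨_, lookupL_mem h, hℓ⟩

lemma mem_storeLocs_updL {σ : Store} {ℓ₀ ℓ : Loc} {sv : Storable}
    (h : ℓ ∈ storeLocs (updL σ ℓ₀ sv)) : ℓ ∈ storeLocs σ ∨ ℓ ∈ sv.locs := by
  obtain ⟨p, hp, hℓ⟩ := List.mem_flatMap.1 h
  obtain ⟨q, hq, rfl⟩ := List.mem_map.1 hp
  split at hℓ
  · exact Or.inr hℓ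
  · exact Or.inl (List.mem_flatMap.2 ⟨q, hq, hℓ⟩)

end Locations

section Cells

def Value.IsNF : Value → Prop
  | .tm t => NormalTm (emb t)
  | .abs .. => True

def Value.NeutralOrAbs : Value → Prop
  | .tm t => Neutral (emb t)
  | .abs .. => True

lemma Value.isNF_of_neutralOrAbs {v : Value} (h : v.NeutralOrAbs) : v.IsNF := by
  cases v with
  | tm t => exact NormalTm.neu h
  | abs => trivial

def Storable.IsArg : Storable → Prop
  | .todo _ => True
  | .done v => v.NeutralOrAbs
  | .pend .. => False

def Storable.IsAbs : Storable → Prop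
  | .pend .. => True
  | .done (.tm (.lam _ _)) => True
  | _ => False

lemma Storable.not_isAbs_of_isArg : ∀ {sv : Storable}, sv.IsArg → ¬ sv.IsAbs
  | .pend .., h, _ | .todo _, _, h => h
  | .done (.tm (.lam _ _)), h, _ => nomatch h
  | .done (.tm (.var _)), _, h | .done (.tm (.app _ _)), _, h | .done (.abs ..), _, h => h

def Cell (P : Storable → Prop) (σ : Store) (ℓ : Loc) : Prop :=
  ∃ sv, lookupL σ ℓ = some sv ∧ P sv

abbrev ArgCell : Store → Loc → Prop := Cell Storable.IsArg

abbrev AbsCell : Store → Loc → Prop := Cell Storable.IsAbs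

lemma ArgCell.not_absCell {σ : Store} {ℓ : Loc} (hA : ArgCell σ ℓ) : ¬ AbsCell σ ℓ := by
  rintro ⟨sv, h, hsv⟩
  obtain ⟨sv', h', hsv'⟩ := hA
  rw [h] at h'
  cases h'
  exact Storable.not_isAbs_of_isArg hsv' hsv

variable {P : Storable → Prop} {σ : Store} {ℓ : Loc}

lemma Cell.cons_of_lookupL_eq_none {ℓ₀ : Loc} (h₀ : lookupL σ ℓ₀ = none) (sv₀ : Storable)
    (h : Cell P σ ℓ) : Cell P ((ℓ₀, sv₀) :: σ) ℓ :=
  let ⟨sv, hl, hsv⟩ := h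
  ⟨sv, lookupL_cons_of_lookupL_eq_none h₀ hl, hsv⟩

lemma Cell.updL {ℓ₀ : Loc} {sv₀ : Storable} (h : Cell P σ ℓ) (h₀ : ℓ = ℓ₀ → P sv₀) :
    Cell P (updL σ ℓ₀ sv₀) ℓ := by
  obtain ⟨sv, hl, hsv⟩ := h
  rw [Cell, lookupL_updL]
  split
  · subst_vars
    exact ⟨sv₀, by simp [hl], h₀ rfl⟩
  · exact ⟨sv, hl, hsv⟩

lemma cells_updL {ℓ₀ : Loc} {sv₀ : Storable}
    (h : ArgCell σ ℓ₀ ∧ sv₀.IsArg ∨ AbsCell σ ℓ₀ ∧ sv₀.IsAbs) :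
    (∀ ℓ, ArgCell σ ℓ → ArgCell (updL σ ℓ₀ sv₀) ℓ) ∧
      (∀ ℓ, AbsCell σ ℓ → AbsCell (updL σ ℓ₀ sv₀) ℓ) := by
  refine ⟨fun ℓ hℓ => hℓ.updL fun hℓ₀ => ?_, fun ℓ hℓ => hℓ.updL fun hℓ₀ => ?_⟩ <;>
    subst hℓ₀ <;> rcases h with ⟨h, hsv⟩ | ⟨h, hsv⟩
  · exact hsv
  · exact absurd h hℓ.not_absCell
  · exact absurd hℓ h.not_absCell
  · exact hsv

end Cells

section Shape

/-- The paper's π-stacks (`Shape σ true`) and ϱ-stacks (`Shape σ false`), in which the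
memo frame pushed by rule 7 stays attached to its λ-frame, and every memo frame records
the kind of cell it will update. -/
inductive Shape (σ : Store) : Bool → Stack → Prop
  | arg {c : Closure} {s : Stack} : Shape σ true s → Shape σ true (.arg c :: s)
  | cache {ℓ : Loc} {s : Stack} : ArgCell σ ℓ → Shape σ true s → Shape σ true (.cache ℓ :: s)
  | rho {s : Stack} : Shape σ false s → Shape σ true s
  | nil : Shape σ false []
  | lamF {x : Ident} {ℓ : Loc} {s : Stack} :
      AbsCell σ ℓ → Shape σ false s → Shape σ false (.lamF x :: .cache ℓ :: s)
  | appL {t : Tm Ident} {s : Stack} :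
      Neutral (emb t) → Shape σ true s → Shape σ false (.appL t :: s)

variable {σ σ' : Store} {s : Stack}

lemma Shape.mono (hArg : ∀ ℓ, ArgCell σ ℓ → ArgCell σ' ℓ)
    (hAbs : ∀ ℓ, AbsCell σ ℓ → AbsCell σ' ℓ) {b : Bool} (h : Shape σ b s) : Shape σ' b s := by
  induction h with
  | arg _ ih => exact .arg ih
  | cache hℓ _ ih => exact .cache (hArg _ hℓ) ih
  | rho _ ih => exact .rho ih
  | nil => exact .nil
  | lamF hℓ _ ih => exact .lamF (hAbs _ hℓ) ih
  | appL ht _ ih => exact .appL ht ih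

lemma Shape.cons_of_lookupL_eq_none {ℓ₀ : Loc} (h₀ : lookupL σ ℓ₀ = none) (sv₀ : Storable)
    {b : Bool} (h : Shape σ b s) : Shape ((ℓ₀, sv₀) :: σ) b s :=
  h.mono (fun _ => Cell.cons_of_lookupL_eq_none h₀ sv₀)
    (fun _ => Cell.cons_of_lookupL_eq_none h₀ sv₀)

lemma Shape.tops (h : Shape σ false s) : s.noArgTop ∧ s.noCacheTop := by
  cases h <;> exact ⟨trivial, trivial⟩

lemma Shape.rho_of_tops (h : Shape σ true s) (h₁ : s.noArgTop) (h₂ : s.noCacheTop) :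
    Shape σ false s := by
  cases h with
  | arg => exact h₁.elim
  | cache => exact h₂.elim
  | rho h => exact h

lemma Shape.of_arg {c : Closure} (h : Shape σ true (.arg c :: s)) : Shape σ true s := by
  cases h with
  | arg h => exact h
  | rho h => cases h

lemma Shape.of_cache {ℓ : Loc} (h : Shape σ true (.cache ℓ :: s)) :
    ArgCell σ ℓ ∧ Shape σ true s := by
  cases h with
  | cache hℓ h => exact ⟨hℓ, h⟩
  | rho h => cases h

lemma Shape.of_appL {t : Tm Ident} (h : Shape σ true (.appL t :: s)) :
    Neutral (emb t) ∧ Shape σ true s := by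
  cases h with
  | rho h => cases h with | appL ht h => exact ⟨ht, h⟩

lemma Shape.of_lamF {x : Ident} (h : Shape σ true (.lamF x :: s)) :
    ∃ ℓ s', s = .cache ℓ :: s' ∧ AbsCell σ ℓ ∧ Shape σ false s' := by
  cases h with
  | rho h => cases h with | lamF hℓ h => exact ⟨_, _, rfl, hℓ, h⟩

end Shape

section Invariant

/-- The second alternative is the moment between rules 11 and 5, when a λ-normal form
returns to the cell of its abstraction. -/
def ContInv (σ : Store) (v : Value) (s : Stack) : Prop :=
  Shape σ true s ∧ v.IsNF ∧ (s.noArgTop ∧ s.noCacheTop ∨ v.NeutralOrAbs) ∨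
    ∃ ℓ s' x t, s = .cache ℓ :: s' ∧ AbsCell σ ℓ ∧ Shape σ false s' ∧
      v = .tm (.lam x t) ∧ NormalTm (emb (.lam x t))

def StoreNF (σ : Store) : Prop := ∀ ℓ v, lookupL σ ℓ = some (.done v) → v.IsNF

def Inv : Conf → Prop
  | k@(.eval _ s σ) => StoreNF σ ∧ (∀ ℓ ∈ k.locs, ArgCell σ ℓ) ∧ Shape σ true s
  | k@(.cont σ v s) => StoreNF σ ∧ (∀ ℓ ∈ k.locs, ArgCell σ ℓ) ∧ ContInv σ v s

variable {σ : Store} {s : Stack} {v : Value}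

lemma ContInv.mono {σ' : Store} (hArg : ∀ ℓ, ArgCell σ ℓ → ArgCell σ' ℓ)
    (hAbs : ∀ ℓ, AbsCell σ ℓ → AbsCell σ' ℓ) (h : ContInv σ v s) : ContInv σ' v s := by
  rcases h with ⟨hs, hv⟩ | ⟨ℓ, s', x, t, rfl, hℓ, hs', hv⟩
  · exact Or.inl ⟨hs.mono hArg hAbs, hv⟩
  · exact Or.inr ⟨ℓ, s', x, t, rfl, hAbs _ hℓ, hs'.mono hArg hAbs, hv⟩

lemma ContInv.of_noCacheTop (h : ContInv σ v s) (hs : s.noCacheTop) :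
    Shape σ true s ∧ v.IsNF := by
  rcases h with ⟨h, hv, _⟩ | ⟨_, _, _, _, rfl, _⟩
  · exact ⟨h, hv⟩
  · exact hs.elim

lemma ContInv.of_arg {c : Closure} (h : ContInv σ v (.arg c :: s)) :
    Shape σ true s ∧ v.NeutralOrAbs := by
  rcases h with ⟨hs, _, ⟨⟨⟩, _⟩ | hv⟩ | ⟨_, _, _, _, ⟨⟩, _⟩
  exact ⟨hs.of_arg, hv⟩

lemma ContInv.of_tops (h : ContInv σ v s) (h₁ : s.noArgTop) (h₂ : s.noCacheTop) :
    Shape σ false s :=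
  (h.of_noCacheTop h₂).1.rho_of_tops h₁ h₂

lemma ContInv.of_cache {ℓ : Loc} (h : ContInv σ v (.cache ℓ :: s)) :
    v.IsNF ∧ ContInv σ v s ∧
      (ArgCell σ ℓ ∧ (Storable.done v).IsArg ∨ AbsCell σ ℓ ∧ (Storable.done v).IsAbs) := by
  rcases h with ⟨hs, hnf, ⟨⟨⟩, ⟨⟩⟩ | hv⟩ | ⟨_, s', x, t, ⟨⟩, hℓ, hs', rfl, hnf⟩
  · obtain ⟨hℓ, hs⟩ := hs.of_cache
    exact ⟨hnf, Or.inl ⟨hs, hnf, Or.inr hv⟩, Or.inl ⟨hℓ, hv⟩⟩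
  · exact ⟨hnf, Or.inl ⟨.rho hs', hnf, Or.inl hs'.tops⟩, Or.inr ⟨hℓ, trivial⟩⟩

lemma StoreNF.cons (h : StoreNF σ) {ℓ₀ : Loc} {sv₀ : Storable}
    (h₀ : ∀ v, sv₀ = .done v → v.IsNF) : StoreNF ((ℓ₀, sv₀) :: σ) := by
  intro ℓ v hl
  rw [lookupL_cons] at hl
  split at hl
  · cases hl
    exact h₀ v rfl
  · exact h ℓ v hl

lemma StoreNF.updL (h : StoreNF σ) (hv : v.IsNF) (ℓ₀ : Loc) :
    StoreNF (updL σ ℓ₀ (.done v)) := by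
  intro ℓ v' hl
  rw [lookupL_updL] at hl
  split at hl
  · obtain ⟨_, _, ⟨⟩⟩ := Option.map_eq_some_iff.1 hl
    exact hv
  · exact h ℓ v' hl

end Invariant

section Transitions

variable {σ : Store} {s : Stack} {e e₂ : Env} {t t₁ t₂ : Tm Ident} {x : Ident} {ℓ ℓ₂ : Loc}
  {v : Value}

lemma inv_r1 (h : Inv (.eval (.app t₁ t₂, e) s σ)) :
    Inv (.eval (t₁, e) (.arg (t₂, e) :: s) σ) := by
  obtain ⟨hnf, hlocs, hs⟩ := h
  refine ⟨hnf, fun ℓ hℓ => hlocs ℓ ?_, .arg hs⟩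
  simp only [Conf.locs, List.flatMap_cons, Frame.locs, List.mem_append] at hℓ ⊢
  tauto

lemma inv_r2 (h₀ : lookupL σ ℓ = none) (h : Inv (.eval (.lam x t, e) s σ)) :
    Inv (.cont ((ℓ, .pend x t e) :: σ) (.abs x t e ℓ) s) := by
  obtain ⟨hnf, hlocs, hs⟩ := h
  refine ⟨hnf.cons (by simp), fun ℓ' hℓ' => (hlocs ℓ' ?_).cons_of_lookupL_eq_none h₀ _,
    Or.inl ⟨hs.cons_of_lookupL_eq_none h₀ _, trivial, Or.inr trivial⟩⟩
  simpa [Conf.locs, Value.locs, storeLocs, Storable.locs] using hℓ'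

lemma inv_r3 (hσ : lookupL σ ℓ = some (.todo (t, e₂))) (h : Inv (.eval (.var x, e) s σ)) :
    Inv (.eval (t, e₂) (.cache ℓ :: s) σ) := by
  obtain ⟨hnf, hlocs, hs⟩ := h
  refine ⟨hnf, fun ℓ' hℓ' => hlocs ℓ' ?_, .cache ⟨_, hσ, trivial⟩ hs⟩
  have := mem_storeLocs_of_lookupL (ℓ := ℓ') hσ
  simp only [Conf.locs, List.flatMap_cons, Frame.locs, List.nil_append, List.mem_append,
    Storable.locs] at hℓ' this ⊢
  tauto

lemma inv_r4done (he : lookupL e x = some ℓ) (hσ : lookupL σ ℓ = some (.done v))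
    (h : Inv (.eval (.var x, e) s σ)) : Inv (.cont σ v s) := by
  obtain ⟨hnf, hlocs, hs⟩ := h
  obtain ⟨_, hl, hv⟩ := hlocs ℓ (by simp [Conf.locs, mem_envLocs_of_lookupL he])
  rw [hσ] at hl
  cases hl
  refine ⟨hnf, fun ℓ' hℓ' => hlocs ℓ' ?_,
    Or.inl ⟨hs, Value.isNF_of_neutralOrAbs hv, Or.inr hv⟩⟩
  have := mem_storeLocs_of_lookupL (ℓ := ℓ') hσ
  simp only [Conf.locs, List.mem_append, Storable.locs] at hℓ' this ⊢
  tauto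

lemma inv_r4free (h : Inv (.eval (.var x, e) s σ)) : Inv (.cont σ (.tm (.var x)) s) := by
  obtain ⟨hnf, hlocs, hs⟩ := h
  refine ⟨hnf, fun ℓ hℓ => hlocs ℓ ?_, Or.inl ⟨hs, .neu (.var _), Or.inr (.var _)⟩⟩
  simp only [Conf.locs, Value.locs, List.nil_append, List.mem_append] at hℓ ⊢
  tauto

lemma inv_r5 (h : Inv (.cont σ v (.cache ℓ :: s))) :
    Inv (.cont (updL σ ℓ (.done v)) v s) := by
  obtain ⟨hnf, hlocs, hc⟩ := h
  obtain ⟨hv, hc, hcell⟩ := hc.of_cache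
  obtain ⟨hArg, hAbs⟩ := cells_updL hcell
  refine ⟨hnf.updL hv ℓ, fun ℓ' hℓ' => hArg ℓ' (hlocs ℓ' ?_), hc.mono hArg hAbs⟩
  have := mem_storeLocs_updL (σ := σ) (ℓ₀ := ℓ) (ℓ := ℓ') (sv := .done v)
  simp only [Conf.locs, List.flatMap_cons, Frame.locs, List.nil_append, List.mem_append,
    Storable.locs] at hℓ' this ⊢
  tauto

lemma inv_r6 (h₀ : lookupL σ ℓ₂ = none)
    (h : Inv (.cont σ (.abs x t e ℓ) (.arg (t₂, e₂) :: s))) :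
    Inv (.eval (t, (x, ℓ₂) :: e) s ((ℓ₂, .todo (t₂, e₂)) :: σ)) := by
  obtain ⟨hnf, hlocs, hc⟩ := h
  refine ⟨hnf.cons (by simp), fun ℓ' hℓ' => ?_, hc.of_arg.1.cons_of_lookupL_eq_none h₀ _⟩
  have : ℓ' = ℓ₂ ∨ ℓ' ∈ (Conf.cont σ (.abs x t e ℓ) (.arg (t₂, e₂) :: s)).locs := by
    simp only [Conf.locs, envLocs, List.map_cons, List.flatMap_cons, storeLocs, Frame.locs,
      Value.locs, Storable.locs, List.mem_append, List.mem_cons] at hℓ' ⊢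
    tauto
  rcases this with rfl | hℓ'
  · exact ⟨.todo (t₂, e₂), by simp [lookupL_cons], trivial⟩
  · exact (hlocs ℓ' hℓ').cons_of_lookupL_eq_none h₀ _

lemma inv_r7 {x' x₀ : Ident} {t₀ : Tm Ident} {e₀ : Env}
    (hσ : lookupL σ ℓ = some (.pend x₀ t₀ e₀)) (h₁ : s.noArgTop) (h₂ : s.noCacheTop)
    (h₀ : lookupL σ ℓ₂ = none) (h : Inv (.cont σ (.abs x t e ℓ) s)) :
    Inv (.eval (t, (x, ℓ₂) :: e) (.lamF x' :: .cache ℓ :: s)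
      ((ℓ₂, .done (.tm (.var x'))) :: σ)) := by
  obtain ⟨hnf, hlocs, hc⟩ := h
  have hℓ : AbsCell σ ℓ := ⟨_, hσ, trivial⟩
  refine ⟨hnf.cons ?_, fun ℓ' hℓ' => ?_, .rho (.lamF (hℓ.cons_of_lookupL_eq_none h₀ _)
    ((hc.of_tops h₁ h₂).cons_of_lookupL_eq_none h₀ _))⟩
  · rintro _ ⟨⟩
    exact .neu (.var _)
  have : ℓ' = ℓ₂ ∨ ℓ' ∈ (Conf.cont σ (.abs x t e ℓ) s).locs := by
    simp only [Conf.locs, envLocs, List.map_cons, List.flatMap_cons, storeLocs, Frame.locs,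
      Value.locs, Storable.locs, List.mem_append, List.mem_cons, List.nil_append] at hℓ' ⊢
    tauto
  rcases this with rfl | hℓ'
  · exact ⟨.done (.tm (.var x')), by simp [lookupL_cons], Neutral.var _⟩
  · exact (hlocs ℓ' hℓ').cons_of_lookupL_eq_none h₀ _

lemma inv_r8 (hσ : lookupL σ ℓ = some (.done v)) (h₁ : s.noArgTop) (h₂ : s.noCacheTop)
    (h : Inv (.cont σ (.abs x t e ℓ) s)) : Inv (.cont σ v s) := by
  obtain ⟨hnf, hlocs, hc⟩ := h
  refine ⟨hnf, fun ℓ' hℓ' => hlocs ℓ' ?_, Or.inl ⟨.rho (hc.of_tops h₁ h₂), hnf ℓ v hσ,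
    Or.inl ⟨h₁, h₂⟩⟩⟩
  have := mem_storeLocs_of_lookupL (ℓ := ℓ') hσ
  simp only [Conf.locs, List.mem_append, Storable.locs] at hℓ' this ⊢
  tauto

lemma inv_r9 (h : Inv (.cont σ (.tm t) (.arg (t₂, e₂) :: s))) :
    Inv (.eval (t₂, e₂) (.appL t :: s) σ) := by
  obtain ⟨hnf, hlocs, hc⟩ := h
  obtain ⟨hs, ht⟩ := hc.of_arg
  refine ⟨hnf, fun ℓ hℓ => hlocs ℓ ?_, .rho (.appL ht hs)⟩
  simp only [Conf.locs, List.flatMap_cons, Frame.locs, Value.locs, List.nil_append,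
    List.mem_append] at hℓ ⊢
  tauto

lemma inv_r10 (h : Inv (.cont σ (.tm t₂) (.appL t₁ :: s))) :
    Inv (.cont σ (.tm (.app t₁ t₂)) s) := by
  obtain ⟨hnf, hlocs, hc⟩ := h
  obtain ⟨hs, ht₂⟩ := hc.of_noCacheTop trivial
  obtain ⟨ht₁, hs⟩ := hs.of_appL
  have ht : Neutral (emb (.app t₁ t₂)) := .app ht₁ ht₂
  refine ⟨hnf, fun ℓ hℓ => hlocs ℓ ?_, Or.inl ⟨hs, .neu ht, Or.inr ht⟩⟩
  simpa [Conf.locs, Frame.locs, Value.locs] using hℓ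

lemma inv_r11 (h : Inv (.cont σ (.tm t) (.lamF x :: s))) :
    Inv (.cont σ (.tm (.lam x t)) s) := by
  obtain ⟨hnf, hlocs, hc⟩ := h
  obtain ⟨hs, ht⟩ := hc.of_noCacheTop trivial
  obtain ⟨ℓ, s', rfl, hℓ, hs'⟩ := hs.of_lamF
  refine ⟨hnf, fun ℓ' hℓ' => hlocs ℓ' ?_, Or.inr ⟨ℓ, s', x, t, rfl, hℓ, hs', rfl, .lam ht⟩⟩
  simpa [Conf.locs, Frame.locs, Value.locs] using hℓ'

end Transitions

lemma Inv.step {r : ℕ} {k k' : Conf} (hk : Step r k k') (h : Inv k) : Inv k' := by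
  cases hk with
  | r1 => exact inv_r1 h
  | r2 h₀ => exact inv_r2 h₀ h
  | r3 _ hσ => exact inv_r3 hσ h
  | r4done he hσ => exact inv_r4done he hσ h
  | r4free => exact inv_r4free h
  | r5 => exact inv_r5 h
  | r6 h₀ => exact inv_r6 h₀ h
  | r7 hσ h₁ h₂ h₀ => exact inv_r7 hσ h₁ h₂ h₀ h
  | r8 hσ h₁ h₂ => exact inv_r8 hσ h₁ h₂ h
  | r9 => exact inv_r9 h
  | r10 => exact inv_r10 h
  | r11 => exact inv_r11 h

lemma inv_init (t : Tm Ident) : Inv (Conf.init t) :=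
  ⟨fun _ _ h => by simp [lookupL] at h, by simp [Conf.locs, envLocs, storeLocs],
    .rho .nil⟩

lemma HistFrom.inv {t₀ : Tm Ident} {H : List Conf} {k : Conf}
    (h : HistFrom (Conf.init t₀) H k) : Inv k := by
  induction h with
  | refl => exact inv_init t₀
  | step _ hk ih => exact ih.step hk

lemma Inv.exists_shape {k : Conf} (h : Inv k) :
    ∃ σ b s, Shape σ b s ∧ (k.stack = s ∨ ∃ ℓ, k.stack = .cache ℓ :: s) :=
  match k, h with
  | .eval _ s σ, ⟨_, _, hs⟩ => ⟨σ, true, s, hs, Or.inl rfl⟩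
  | .cont σ _ s, ⟨_, _, Or.inl ⟨hs, _⟩⟩ => ⟨σ, true, s, hs, Or.inl rfl⟩
  | .cont σ _ _, ⟨_, _, Or.inr ⟨ℓ, s', _, _, rfl, _, hs', _⟩⟩ =>
    ⟨σ, false, s', hs', Or.inr ⟨ℓ, rfl⟩⟩

section Decoding

variable {V : Type}

lemma Ctx.comp_hole (C : Ctx V) : C.comp .hole = C := by
  induction C <;> simp [Ctx.comp, *]

lemma Ctx.comp_assoc (C D E : Ctx V) : (C.comp D).comp E = C.comp (D.comp E) := by
  induction C <;> simp [Ctx.comp, *]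

/-- The contexts that may fill the hole of a decoded π-stack (`N̄`) or ϱ-stack (`N`). -/
def Pluggable : Bool → Ctx V → Prop
  | true => NOBar
  | false => NOCtx

lemma Shape.noCtx_comp {σ : Store} {b : Bool} {s : Stack} (hs : Shape σ b s) {H : List Conf}
    {C D : Ctx W} (hC : DecS H s C) (hD : Pluggable b D) : NOCtx (C.comp D) := by
  induction hs generalizing C D with
  | arg _ ih =>
    cases hC with
    | arg hC _ => exact Ctx.comp_assoc .. ▸ ih hC (NOBar.appL hD)
  | cache _ _ ih => cases hC with | cache hC => exact ih hC hD
  | rho _ ih => exact ih hC (NOCtx.bar hD)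
  | nil => cases hC; exact hD
  | lamF _ _ ih =>
    cases hC with
    | lamF hC => cases hC with | cache hC => exact Ctx.comp_assoc .. ▸ ih hC (NOCtx.lam hD)
  | appL ht _ ih =>
    cases hC with
    | appL hC => exact Ctx.comp_assoc .. ▸ ih hC (NOBar.appR ht hD)

lemma Shape.noCtx {σ : Store} {b : Bool} {s : Stack} (hs : Shape σ b s) {H : List Conf}
    {C : Ctx W} (hC : DecS H s C) : NOCtx C := by
  have hD : Pluggable b (.hole : Ctx W) := by cases b; exacts [NOCtx.bar .hole, NOBar.hole]
  simpa only [Ctx.comp_hole] using hs.noCtx_comp hC hD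

end Decoding

/-- Stack shape invariant: for any reachable configuration `k` with history `H`,
the decoding of its stack is a normal-order context. -/
theorem stack_shape_invariant {t0 : Tm Ident} {H : List Conf} {k : Conf}
    (h : HistFrom (Conf.init t0) H k) {C : Ctx W} (hC : DecS H k.stack C) :
    NOCtx C := by
  obtain ⟨σ, b, s, hs, hk | ⟨ℓ, hk⟩⟩ := h.inv.exists_shape <;> rw [hk] at hC
  · exact hs.noCtx hC
  · cases hC with | cache hC => exact hs.noCtx hC
end RKNL
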